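/- arXiv:1802.08500 — 8 statements merged into one kernel-verified Lean document; each statement's English description precedes it below -/
import Mathlib

section
/- Let L be a countable first-order language and M a countably infinite L-structure such that for every natural number n, the action of the automorphism group of M on the set of n-tuples (Fin n → M), acting coordinatewise, has only finitely many orbits. Then the complete theory of M is ℵ₀-categorical, i.e., any two countable models of the complete theory of M are isomorphic. -/
/-!
Automorphic tuples have the same type, so `M` realizes only finitely many `n`-types. Each of them
is isolated within `M` by a single formula that separates it from the finitely many others, and
"every tuple satisfies one of these formulas" and "each of them implies its type" are first-order
facts, so they hold in every model of the complete theory of `M`. Hence in such a model every tuple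
realizes an isolated type of `M`; isolation lets finite partial elementary maps between two models
be extended in both directions, and a back-and-forth along enumerations of two countable models
produces an isomorphism.
-/

open FirstOrder Cardinal

universe w

namespace FirstOrder.Language

variable {L : Language} {α γ : Type*} {M N N₁ N₂ N₃ : Type*} [L.Structure M] [L.Structure N]
  [L.Structure N₁] [L.Structure N₂] [L.Structure N₃]

variable (L) in
def SameType (b : α → N₁) (c : α → N₂) : Prop :=
  ∀ φ : L.Formula α, φ.Realize b ↔ φ.Realize c

namespace SameType

variable {b : α → N₁} {c : α → N₂} {d : α → N₃}

theorem refl (b : α → N₁) : L.SameType b b := fun _ => Iff.rfl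

theorem symm (h : L.SameType b c) : L.SameType c b := fun φ => (h φ).symm

theorem trans (h : L.SameType b c) (h' : L.SameType c d) : L.SameType b d :=
  fun φ => (h φ).trans (h' φ)

theorem equivalence : Equivalence (L.SameType : (α → M) → (α → M) → Prop) :=
  ⟨refl, symm, trans⟩

theorem comp {β : Type*} (h : L.SameType b c) (f : β → α) : L.SameType (b ∘ f) (c ∘ f) :=
  fun φ => by simpa only [Formula.realize_relabel] using h (φ.relabel f)

theorem exists_realize_not_realize (h : ¬L.SameType b c) :
    ∃ φ : L.Formula α, φ.Realize b ∧ ¬φ.Realize c := by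
  obtain ⟨φ, hφ⟩ := not_forall.1 h
  by_cases hb : φ.Realize b
  · exact ⟨φ, hb, fun hc => hφ (iff_of_true hb hc)⟩
  · refine ⟨φ.not, hb, fun hc => hφ (iff_of_false hb ?_)⟩
    simpa only [Formula.realize_not, not_not] using hc

end SameType

theorem sameType_comp_equiv (e : M ≃[L] N) (a : α → M) : L.SameType a (e ∘ a) :=
  fun φ => (StrongHomClass.realize_formula e φ).symm

theorem Formula.realize_of_model_completeTheory [Finite α] [N ⊨ L.completeTheory M]
    {φ : L.Formula α} (h : ∀ a : α → M, φ.Realize a) (b : α → N) : φ.Realize b := by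
  have hM : M ⊨ (φ.relabel (Sum.inr : α → Empty ⊕ α)).iAlls α := by
    simpa [Sentence.Realize, Formula.realize_relabel] using fun a => h a
  have hN := (realize_iff_of_model_completeTheory M N _).2 hM
  simp only [Sentence.Realize, Formula.realize_iAlls, Formula.realize_relabel] at hN
  exact hN b

theorem sameType_of_realize_isolating [Finite α] [N ⊨ L.completeTheory M] {θ : L.Formula α}
    {a : α → M} (hθ : ∀ a' : α → M, θ.Realize a' → L.SameType a' a) {b : α → N}
    (hb : θ.Realize b) : L.SameType b a := by
  have transfer (ψ : L.Formula α) (ha : ψ.Realize a) : ψ.Realize b := by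
    have himp (a' : α → M) : (θ.imp ψ).Realize a' :=
      Formula.realize_imp.2 fun ha' => (hθ a' ha' ψ).2 ha
    exact Formula.realize_imp.1 (Formula.realize_of_model_completeTheory himp b) hb
  refine fun ψ => ⟨fun hψ => by_contra fun ha => ?_, transfer ψ⟩
  exact (Formula.realize_not.1 (transfer ψ.not (Formula.realize_not.2 ha))) hψ

def RealizesFinitelyManyTypes (L : Language) (M : Type*) [L.Structure M] (α : Type*) : Prop :=
  ∃ s : Finset (α → M), ∀ a : α → M, ∃ a₀ ∈ s, L.SameType a a₀

section Isolation

variable (hM : L.RealizesFinitelyManyTypes M α)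
include hM

theorem exists_isolating_formula (a : α → M) :
    ∃ θ : L.Formula α, θ.Realize a ∧ ∀ a' : α → M, θ.Realize a' → L.SameType a' a := by
  obtain ⟨s, hs⟩ := hM
  have separate (a' : α → M) :
      ∃ φ : L.Formula α, φ.Realize a ∧ (φ.Realize a' → L.SameType a' a) := by
    by_cases h : L.SameType a' a
    · exact ⟨⊤, by simp, fun _ => h⟩
    · obtain ⟨φ, ha, ha'⟩ := SameType.exists_realize_not_realize fun h' => h h'.symm
      exact ⟨φ, ha, fun h' => absurd h' ha'⟩
  choose φ hφa hφ using separate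
  refine ⟨Formula.iInf fun a₀ : s => φ a₀, by simp [hφa], fun a' ha' => ?_⟩
  obtain ⟨a₀, ha₀, h⟩ := hs a'
  have := Formula.realize_iInf.1 ha' ⟨a₀, ha₀⟩
  exact h.trans (hφ a₀ ((h _).1 this))

theorem exists_sameType_of_model [Finite α] [N ⊨ L.completeTheory M] (b : α → N) :
    ∃ a : α → M, L.SameType b a := by
  choose θ hθa hθ using exists_isolating_formula hM
  obtain ⟨s, hs⟩ := hM
  have hcover (a : α → M) : (Formula.iSup fun a₀ : s => θ a₀).Realize a := by
    obtain ⟨a₀, ha₀, h⟩ := hs a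
    exact Formula.realize_iSup.2 ⟨⟨a₀, ha₀⟩, (h _).2 (hθa a₀)⟩
  obtain ⟨a₀, hb⟩ := Formula.realize_iSup.1 (Formula.realize_of_model_completeTheory hcover b)
  exact ⟨a₀, sameType_of_realize_isolating (hθ a₀) hb⟩

end Isolation

theorem SameType.exists_extend [Finite α] [Finite γ] [N₁ ⊨ L.completeTheory M]
    [N₂ ⊨ L.completeTheory M] (hM : L.RealizesFinitelyManyTypes M (α ⊕ γ)) {b : α → N₁}
    {c : α → N₂} (h : L.SameType b c) (x : γ → N₁) :
    ∃ y : γ → N₂, L.SameType (Sum.elim b x) (Sum.elim c y) := by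
  obtain ⟨a, ha⟩ := exists_sameType_of_model hM (Sum.elim b x)
  -- `θ` isolates the type of `(b, x)`, and `∃ z, θ (b, z)` passes from `b` to `c`.
  obtain ⟨θ, hθa, hθ⟩ := exists_isolating_formula hM a
  have hb : (θ.iExs γ).Realize b := Formula.realize_iExs.2 ⟨x, (ha θ).2 hθa⟩
  obtain ⟨y, hy⟩ := Formula.realize_iExs.1 ((h _).1 hb)
  exact ⟨y, ha.trans (sameType_of_realize_isolating hθ hy).symm⟩

variable (L) in
/-- A finset of pairs, read as a tuple indexed by itself. It need not be a graph a priori: equality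
formulas force that. -/
def IsPartialElementary (F : Finset (N₁ × N₂)) : Prop :=
  L.SameType (fun p : F => (p : N₁ × N₂).1) (fun p : F => (p : N₁ × N₂).2)

namespace IsPartialElementary

variable {F G : Finset (N₁ × N₂)}

theorem sameType_of_forall_mem (hF : L.IsPartialElementary F) {v : α → N₁ × N₂}
    (hv : ∀ i, v i ∈ F) : L.SameType (fun i => (v i).1) (fun i => (v i).2) :=
  SameType.comp hF fun i => ⟨v i, hv i⟩

theorem mono (hG : L.IsPartialElementary G) (hFG : F ⊆ G) : L.IsPartialElementary F :=
  hG.sameType_of_forall_mem fun p => hFG p.2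

variable [DecidableEq N₁] [DecidableEq N₂]

theorem insert_of_sameType {x : N₁} {y : N₂}
    (h : L.SameType (Sum.elim (fun p : F => (p : N₁ × N₂).1) fun _ : Unit => x)
      (Sum.elim (fun p : F => (p : N₁ × N₂).2) fun _ : Unit => y)) :
    L.IsPartialElementary (insert (x, y) F) := by
  let g (p : (insert (x, y) F : Finset _)) : F ⊕ Unit :=
    if hp : p.1 ∈ F then .inl ⟨p.1, hp⟩ else .inr ()
  have hg_new (p : (insert (x, y) F : Finset _)) (hp : p.1 ∉ F) :
      g p = .inr () ∧ p.1 = (x, y) :=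
    ⟨dif_neg hp, (Finset.mem_insert.1 p.2).resolve_right hp⟩
  unfold IsPartialElementary
  convert h.comp g using 1 <;> funext p <;> by_cases hp : p.1 ∈ F
  · simp [g, hp]
  · simp [hg_new p hp]
  · simp [g, hp]
  · simp [hg_new p hp]

variable [N₁ ⊨ L.completeTheory M] [N₂ ⊨ L.completeTheory M]
  (hM : L.RealizesFinitelyManyTypes M (F ⊕ Unit))
include hM

theorem exists_insert_left (hF : L.IsPartialElementary F) (x : N₁) :
    ∃ y : N₂, L.IsPartialElementary (insert (x, y) F) := by
  obtain ⟨y, hy⟩ := SameType.exists_extend hM hF fun _ : Unit => x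
  exact ⟨y (), insert_of_sameType (x := x) (y := y ()) hy⟩

theorem exists_insert_right (hF : L.IsPartialElementary F) (y : N₂) :
    ∃ x : N₁, L.IsPartialElementary (insert (x, y) F) := by
  obtain ⟨x, hx⟩ := SameType.exists_extend hM (SameType.symm hF) fun _ : Unit => y
  exact ⟨x (), insert_of_sameType (x := x ()) (y := y) hx.symm⟩

end IsPartialElementary

def equivOfSameType (e : N₁ ≃ N₂) (he : ∀ {n : ℕ} (a : Fin n → N₁), L.SameType a (e ∘ a)) :
    N₁ ≃[L] N₂ where
  toEquiv := e
  map_fun' {n} f a := by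
    have := he (Fin.snoc a (Structure.funMap f a))
      (Term.equal (Term.func f fun i => Term.var i.castSucc) (Term.var (Fin.last n)))
    simpa [Formula.realize_equal, Fin.comp_snoc, Function.comp_def, eq_comm] using this
  map_rel' {n} r a := by
    simpa [Formula.realize_rel, Function.comp_def] using (he a (r.formula Term.var)).symm

theorem nonempty_equiv_of_forall_isPartialElementary (U : Set (N₁ × N₂))
    (hU : ∀ F : Finset (N₁ × N₂), ↑F ⊆ U → L.IsPartialElementary F)
    (hdom : ∀ x, ∃ y, (x, y) ∈ U) (hcod : ∀ y, ∃ x, (x, y) ∈ U) :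
    Nonempty (N₁ ≃[L] N₂) := by
  classical
  have tuple {n : ℕ} (v : Fin n → N₁ × N₂) (hv : ∀ i, v i ∈ U) :
      L.SameType (fun i => (v i).1) (fun i => (v i).2) :=
    (hU (Finset.univ.image v) (by simpa [Set.subset_def] using hv)).sameType_of_forall_mem
      (by simp)
  have fst_eq_iff {p q : N₁ × N₂} (hp : p ∈ U) (hq : q ∈ U) : p.1 = q.1 ↔ p.2 = q.2 := by
    simpa using tuple ![p, q] (Fin.forall_fin_two.2 ⟨hp, hq⟩)
      (Term.equal (Term.var 0) (Term.var 1))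
  choose g hg using hdom
  have hinj : Function.Injective g := fun x x' h => (fst_eq_iff (hg x) (hg x')).2 h
  have hsurj : Function.Surjective g := fun y =>
    let ⟨x, hx⟩ := hcod y
    ⟨x, (fst_eq_iff (hg x) hx).1 rfl⟩
  exact ⟨equivOfSameType (Equiv.ofBijective g ⟨hinj, hsurj⟩) fun a =>
    tuple (fun i => (a i, g (a i))) fun i => hg (a i)⟩

theorem nonempty_equiv_of_forall_realizesFinitelyManyTypes {N₁ N₂ : Type w} [L.Structure N₁]
    [L.Structure N₂] [Countable N₁] [Countable N₂] [N₁ ⊨ L.completeTheory M]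
    [N₂ ⊨ L.completeTheory M] (hM : ∀ (α : Type w) [Finite α], L.RealizesFinitelyManyTypes M α) :
    Nonempty (N₁ ≃[L] N₂) := by
  classical
  let P := {F : Finset (N₁ × N₂) // L.IsPartialElementary F}
  have hempty : L.IsPartialElementary (∅ : Finset (N₁ × N₂)) := by
    obtain ⟨a, ha⟩ := exists_sameType_of_model (hM _) fun p : (∅ : Finset (N₁ × N₂)) => p.1.1
    obtain ⟨a', ha'⟩ := exists_sameType_of_model (hM _) fun p : (∅ : Finset (N₁ × N₂)) => p.1.2
    rw [Subsingleton.elim a a'] at ha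
    exact ha.trans ha'.symm
  -- The back-and-forth requirements: `x` lies in the domain, resp. `y` in the range.
  let D : N₁ ⊕ N₂ → Order.Cofinal P := Sum.elim
    (fun x => ⟨{F | ∃ y, (x, y) ∈ F.1}, fun F =>
      let ⟨y, hy⟩ := F.2.exists_insert_left (hM _) x
      ⟨⟨_, hy⟩, ⟨y, Finset.mem_insert_self _ _⟩, Finset.subset_insert _ _⟩⟩)
    (fun y => ⟨{F | ∃ x, (x, y) ∈ F.1}, fun F =>
      let ⟨x, hx⟩ := F.2.exists_insert_right (hM _) y
      ⟨⟨_, hx⟩, ⟨x, Finset.mem_insert_self _ _⟩, Finset.subset_insert _ _⟩⟩)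
  let _ := Encodable.ofCountable (N₁ ⊕ N₂)
  let seq := Order.sequenceOfCofinals ⟨∅, hempty⟩ D
  have hmono : Monotone fun k => ((seq k).1 : Set (N₁ × N₂)) := fun i j hij =>
    Finset.coe_subset.2 (Order.sequenceOfCofinals.monotone (⟨∅, hempty⟩ : P) D hij)
  refine nonempty_equiv_of_forall_isPartialElementary (⋃ k, ((seq k).1 : Set (N₁ × N₂)))
    (fun F hF => ?_) (fun x => ?_) (fun y => ?_)
  · obtain ⟨k, hk⟩ := hmono.directed_le.exists_mem_subset_of_finset_subset_biUnion hF
    exact (seq k).2.mono (Finset.coe_subset.1 hk)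
  · obtain ⟨y, hy⟩ := Order.sequenceOfCofinals.encode_mem _ D (Sum.inl x)
    exact ⟨y, Set.mem_iUnion.2 ⟨_, hy⟩⟩
  · obtain ⟨x, hx⟩ := Order.sequenceOfCofinals.encode_mem _ D (Sum.inr y)
    exact ⟨x, Set.mem_iUnion.2 ⟨_, hx⟩⟩

theorem categorical_aleph0_completeTheory
    (hM : ∀ (α : Type w) [Finite α], L.RealizesFinitelyManyTypes M α) :
    Categorical (ℵ₀ : Cardinal.{w}) (L.completeTheory M) := fun _ _ h₁ h₂ =>
  have := Cardinal.mk_le_aleph0_iff.1 h₁.le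
  have := Cardinal.mk_le_aleph0_iff.1 h₂.le
  nonempty_equiv_of_forall_realizesFinitelyManyTypes hM

theorem realizesFinitelyManyTypes_of_finite_orbits
    (horb : ∀ n : ℕ, Finite (Quot fun a b : Fin n → M => ∃ π : M ≃[L] M, ⇑π ∘ a = b))
    (α : Type*) [Finite α] : L.RealizesFinitelyManyTypes M α := by
  classical
  obtain ⟨n, ⟨e⟩⟩ := Finite.exists_equiv_fin α
  let R (a b : Fin n → M) : Prop := ∃ π : M ≃[L] M, ⇑π ∘ a = b
  have : Finite (Quot R) := horb n
  let _ := Fintype.ofFinite (Quot R)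
  refine ⟨Finset.univ.image fun q : Quot R => q.out ∘ e, fun a =>
    ⟨_, Finset.mem_image_of_mem _ (Finset.mem_univ (Quot.mk _ (a ∘ e.symm))), ?_⟩⟩
  have orbit_sameType (b c : Fin n → M) (h : R b c) : L.SameType b c := by
    obtain ⟨π, rfl⟩ := h
    exact sameType_comp_equiv π b
  have h : L.SameType (a ∘ e.symm) (Quot.mk R (a ∘ e.symm)).out :=
    SameType.equivalence.eqvGen_iff.1 <|
      (Quot.eqvGen_exact (Quot.out_eq _).symm).mono orbit_sameType
  simpa [Function.comp_assoc] using h.comp e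

end FirstOrder.Language

theorem stmt_1_general (L : FirstOrder.Language)
    (M : Type*) [L.Structure M]
    (horb : ∀ n : ℕ, Finite (Quot (fun a b : Fin n → M => ∃ π : M ≃[L] M, ⇑π ∘ a = b))) :
    Cardinal.Categorical ℵ₀ (L.completeTheory M) :=
  Language.categorical_aleph0_completeTheory fun α _ =>
    Language.realizesFinitelyManyTypes_of_finite_orbits horb α

/-- Ryll-Nardzewski–Engeler–Svenonius, converse direction: if for every `n` the automorphism
group of a countably infinite structure `M` over a countable language has finitely many orbits
on `n`-tuples, then the complete theory of `M` is ℵ₀-categorical. -/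
theorem stmt_1 (L : FirstOrder.Language) [Countable L.Symbols]
    (M : Type*) [L.Structure M] [Countable M] [Infinite M]
    (horb : ∀ n : ℕ, Finite (Quot (fun a b : Fin n → M => ∃ π : M ≃[L] M, ⇑π ∘ a = b))) :
    Cardinal.Categorical ℵ₀ (L.completeTheory M) :=
  stmt_1_general L M horb
end

section
/- Let L be a first-order language, M an L-structure, and X ⊆ (Fin n → M). Suppose X has a least support: a finite set S ⊆ M such that S supports X and S ⊆ T for every finite T ⊆ M supporting X. Then for every automorphism π of M, the image π(S) = {π(a) : a ∈ S} is the least support of the image of X under the coordinatewise action of π: π(S) supports π·X, and π(S) ⊆ T for every finite T supporting π·X. -/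
open FirstOrder

/-- The least-support function commutes with automorphisms: if `S` is the least finite support
of `X ⊆ (Fin n → M)`, then for every automorphism `π` of `M`, the image `π '' S` is the least
finite support of the image of `X` under the coordinatewise action of `π`. -/
theorem stmt_10 (L : FirstOrder.Language) (M : Type*) [L.Structure M]
    (n : ℕ) (X : Set (Fin n → M)) (S : Set M) (hSfin : S.Finite)
    (hsupp : ∀ ρ : M ≃[L] M, (∀ a ∈ S, ρ a = a) → (fun x : Fin n → M => ⇑ρ ∘ x) '' X = X)
    (hleast : ∀ T : Set M, T.Finite →
      (∀ ρ : M ≃[L] M, (∀ a ∈ T, ρ a = a) → (fun x : Fin n → M => ⇑ρ ∘ x) '' X = X) →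
      S ⊆ T)
    (π : M ≃[L] M) :
    (∀ ρ : M ≃[L] M, (∀ a ∈ ⇑π '' S, ρ a = a) →
        (fun x : Fin n → M => ⇑ρ ∘ x) '' ((fun x : Fin n → M => ⇑π ∘ x) '' X)
          = (fun x : Fin n → M => ⇑π ∘ x) '' X) ∧
      (∀ T : Set M, T.Finite →
        (∀ ρ : M ≃[L] M, (∀ a ∈ T, ρ a = a) →
          (fun x : Fin n → M => ⇑ρ ∘ x) '' ((fun x : Fin n → M => ⇑π ∘ x) '' X)
            = (fun x : Fin n → M => ⇑π ∘ x) '' X) →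
        ⇑π '' S ⊆ T) := by
  constructor
  · intro ρ hρ
    set σ : M ≃[L] M := π.symm.comp (ρ.comp π) with hσ
    have hσfix : ∀ a ∈ S, σ a = a := by
      intro a ha
      have : ρ (π a) = π a := hρ _ ⟨a, ha, rfl⟩
      simp [hσ, this]
    have hX := hsupp σ hσfix
    have key : ∀ x : Fin n → M, ⇑ρ ∘ (⇑π ∘ x) = ⇑π ∘ (⇑σ ∘ x) := by
      intro x; funext i; simp [hσ]
    rw [Set.image_image]
    calc (fun x : Fin n → M => ⇑ρ ∘ (⇑π ∘ x)) '' X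
        = (fun x : Fin n → M => ⇑π ∘ (⇑σ ∘ x)) '' X := by
          apply Set.image_congr; intro x _; exact key x
      _ = (fun x : Fin n → M => ⇑π ∘ x) '' ((fun x : Fin n → M => ⇑σ ∘ x) '' X) := by
          rw [Set.image_image]
      _ = (fun x : Fin n → M => ⇑π ∘ x) '' X := by rw [hX]
  · intro T hTfin hT
    have hinj : Function.Injective (fun x : Fin n → M => ⇑π ∘ x) := by
      intro x y h
      funext i
      have := congrFun h i
      exact π.injective this
    have hsub : S ⊆ ⇑π.symm '' T := by
      apply hleast _ (hTfin.image _)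
      intro ρ hρ
      set τ : M ≃[L] M := π.comp (ρ.comp π.symm) with hτ
      have hτfix : ∀ a ∈ T, τ a = a := by
        intro a ha
        have : ρ (π.symm a) = π.symm a := hρ _ ⟨a, ha, rfl⟩
        simp [hτ, this]
      have hX := hT τ hτfix
      rw [Set.image_image] at hX
      have key : ∀ x : Fin n → M, ⇑τ ∘ (⇑π ∘ x) = ⇑π ∘ (⇑ρ ∘ x) := by
        intro x; funext i; simp [hτ]
      have hX2 : (fun x : Fin n → M => ⇑π ∘ (⇑ρ ∘ x)) '' X
          = (fun x : Fin n → M => ⇑π ∘ x) '' X := by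
        rw [← hX]; apply Set.image_congr; intro x _; exact (key x).symm
      rw [← Set.image_image (fun x : Fin n → M => ⇑π ∘ x) (fun x : Fin n → M => ⇑ρ ∘ x)] at hX2
      exact hinj.image_injective hX2
    intro b hb
    obtain ⟨a, haS, rfl⟩ := hb
    obtain ⟨t, ht, hta⟩ := hsub haS
    rw [← hta]
    simpa using ht
end

section
/- Let L be a first-order language, M an L-structure, and X, Y ⊆ (Fin n → M) two sets such that π·X = Y for some automorphism π of M (acting coordinatewise and taking images). Suppose X has a least finite support S and Y has a least finite support T (a least support is a finite supporting set contained in every finite supporting set). Then S and T have the same cardinality. -/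
open FirstOrder

/-- If `S` supports `X`, then `π '' S` supports `π ⬝ X`. -/
lemma support_image (L : FirstOrder.Language) (M : Type*) [L.Structure M]
    (n : ℕ) (X : Set (Fin n → M)) (π : M ≃[L] M) (S : Set M)
    (hSsupp : ∀ ρ : M ≃[L] M, (∀ a ∈ S, ρ a = a) → (fun x : Fin n → M => ⇑ρ ∘ x) '' X = X) :
    ∀ ρ : M ≃[L] M, (∀ a ∈ ⇑π '' S, ρ a = a) →
      (fun x : Fin n → M => ⇑ρ ∘ x) '' ((fun x : Fin n → M => ⇑π ∘ x) '' X)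
        = (fun x : Fin n → M => ⇑π ∘ x) '' X := by
  intro ρ hρ
  set σ : M ≃[L] M := (π.symm.comp ρ).comp π with hσ
  have hσfix : ∀ a ∈ S, σ a = a := by
    intro a ha
    have : ρ (π a) = π a := hρ (π a) ⟨a, ha, rfl⟩
    simp [hσ, FirstOrder.Language.Equiv.comp_apply, this]
  have hX := hSsupp σ hσfix
  have hcomm : ∀ x : Fin n → M, ⇑ρ ∘ (⇑π ∘ x) = ⇑π ∘ (⇑σ ∘ x) := by
    intro x; funext i; simp [hσ]
  calc (fun x : Fin n → M => ⇑ρ ∘ x) '' ((fun x : Fin n → M => ⇑π ∘ x) '' X)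
      = (fun x : Fin n → M => ⇑π ∘ x) '' ((fun x : Fin n → M => ⇑σ ∘ x) '' X) := by
        rw [Set.image_image, Set.image_image]; exact Set.image_congr fun x _ => hcomm x
    _ = (fun x : Fin n → M => ⇑π ∘ x) '' X := by rw [hX]

/-- Sets in the same orbit of the automorphism group have least supports of the same
cardinality. -/
theorem stmt_11 (L : FirstOrder.Language) (M : Type*) [L.Structure M]
    (n : ℕ) (X Y : Set (Fin n → M)) (π : M ≃[L] M)
    (hXY : (fun x : Fin n → M => ⇑π ∘ x) '' X = Y)
    (S : Set M) (hSfin : S.Finite)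
    (hSsupp : ∀ ρ : M ≃[L] M, (∀ a ∈ S, ρ a = a) → (fun x : Fin n → M => ⇑ρ ∘ x) '' X = X)
    (hSleast : ∀ S' : Set M, S'.Finite →
      (∀ ρ : M ≃[L] M, (∀ a ∈ S', ρ a = a) → (fun x : Fin n → M => ⇑ρ ∘ x) '' X = X) →
      S ⊆ S')
    (T : Set M) (hTfin : T.Finite)
    (hTsupp : ∀ ρ : M ≃[L] M, (∀ a ∈ T, ρ a = a) → (fun x : Fin n → M => ⇑ρ ∘ x) '' Y = Y)
    (hTleast : ∀ T' : Set M, T'.Finite →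
      (∀ ρ : M ≃[L] M, (∀ a ∈ T', ρ a = a) → (fun x : Fin n → M => ⇑ρ ∘ x) '' Y = Y) →
      T ⊆ T') :
    S.ncard = T.ncard := by
  have hYX : (fun x : Fin n → M => ⇑π.symm ∘ x) '' Y = X := by
    rw [← hXY, Set.image_image]
    have : ∀ x : Fin n → M, ⇑π.symm ∘ (⇑π ∘ x) = x := by
      intro x; funext i; simp
    simp only [this, Set.image_id']
  -- π '' S supports Y
  have h1 : T ⊆ ⇑π '' S := by
    apply hTleast _ (hSfin.image _)
    have := support_image L M n X π S hSsupp
    rwa [hXY] at this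
  -- π.symm '' T supports X
  have h2 : S ⊆ ⇑π.symm '' T := by
    apply hSleast _ (hTfin.image _)
    have := support_image L M n Y π.symm T hTsupp
    rwa [hYX] at this
  have h3 : ⇑π '' S ⊆ T := by
    intro b hb
    obtain ⟨a, ha, rfl⟩ := hb
    obtain ⟨t, ht, hta⟩ := h2 ha
    rwa [← hta, π.apply_symm_apply]
  have heq : ⇑π '' S = T := Set.Subset.antisymm h3 h1
  rw [← heq, Set.ncard_image_of_injective _ π.injective]
end

section
/- There do not exist a finite set S ⊆ ℕ and a bijection f from ℕ to the set {p : Finset ℕ | p.card = 2} of two-element subsets of ℕ such that for every permutation π : Equiv.Perm ℕ with π(s) = s for all s ∈ S, one has f(π(a)) = (f(a)).image π for all a ∈ ℕ. -/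
/-- Over the pure set `ℕ`, there is no finitely supported equivariant bijection between
the set of atoms and the set of two-element subsets of atoms. -/
theorem stmt_14 :
    ¬ ∃ (S : Finset ℕ) (f : ℕ → {p : Finset ℕ // p.card = 2}),
      Function.Bijective f ∧
        ∀ π : Equiv.Perm ℕ, (∀ s ∈ S, π s = s) →
          ∀ a : ℕ, ((f (π a) : Finset ℕ)) = (f a : Finset ℕ).image π := by
  rintro ⟨S, f, hf, hequiv⟩
  -- Key claim: for every atom c, f c ⊆ S ∪ {c}
  have hsub : ∀ c, (f c : Finset ℕ) ⊆ S ∪ {c} := by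
    intro c x hx
    by_contra hxn
    simp only [Finset.mem_union, Finset.mem_singleton, not_or] at hxn
    obtain ⟨hxS, hxc⟩ := hxn
    obtain ⟨y, hy⟩ := Infinite.exists_notMem_finset (S ∪ (f c : Finset ℕ) ∪ {c})
    simp only [Finset.mem_union, Finset.mem_singleton, not_or] at hy
    obtain ⟨⟨hyS, hyfc⟩, hyc⟩ := hy
    set π := Equiv.swap x y with hπ
    have hπS : ∀ s ∈ S, π s = s := by
      intro s hs
      exact Equiv.swap_apply_of_ne_of_ne (fun h => hxS (h ▸ hs)) (fun h => hyS (h ▸ hs))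
    have hπc : π c = c :=
      Equiv.swap_apply_of_ne_of_ne (fun h => hxc h.symm) (fun h => hyc h.symm)
    have heq := hequiv π hπS c
    rw [hπc] at heq
    have : y ∈ (f c : Finset ℕ) := by
      rw [heq]
      exact Finset.mem_image.mpr ⟨x, hx, Equiv.swap_apply_left x y⟩
    exact hyfc this
  -- choose two fresh atoms a ≠ b outside S
  obtain ⟨a, ha⟩ := Infinite.exists_notMem_finset S
  obtain ⟨b, hb⟩ := Infinite.exists_notMem_finset (insert a S)
  simp only [Finset.mem_insert, not_or] at hb
  obtain ⟨hba, hbS⟩ := hb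
  have hab : a ≠ b := fun h => hba h.symm
  obtain ⟨c, hc⟩ := hf.2 ⟨{a, b}, Finset.card_pair hab⟩
  have hcc : (f c : Finset ℕ) = {a, b} := by rw [hc]
  have hac : a ∈ S ∪ {c} := hsub c (by rw [hcc]; simp)
  have hbc : b ∈ S ∪ {c} := hsub c (by rw [hcc]; simp)
  simp only [Finset.mem_union, Finset.mem_singleton] at hac hbc
  rcases hac with h | h
  · exact ha h
  · rcases hbc with h' | h'
    · exact hbS h'
    · exact hab (h.trans h'.symm)
end

section
/- Let K be a field, V an infinite-dimensional K-vector space, W ⊆ V a finite-dimensional K-subspace, and S ⊆ V a finite set. Then the following are equivalent: (1) every linear automorphism e : V ≃ₗ[K] V with e(s) = s for all s ∈ S maps W onto W (i.e., the image of W under e equals W); (2) W is contained in the K-linear span of S. -/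
/-- In an infinite-dimensional vector space `V`, a finite set `S` supports a
finite-dimensional subspace `W` (i.e. every linear automorphism fixing `S` pointwise maps `W`
onto `W`) if and only if `W` is contained in the linear span of `S`. -/
theorem stmt_15 (K : Type*) [Field K] (V : Type*) [AddCommGroup V] [Module K V]
    (hV : ¬ FiniteDimensional K V)
    (W : Submodule K V) (hW : FiniteDimensional K W)
    (S : Set V) (hS : S.Finite) :
    (∀ e : V ≃ₗ[K] V, (∀ s ∈ S, e s = s) → Submodule.map (e : V →ₗ[K] V) W = W) ↔
      W ≤ Submodule.span K S := by
  classical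
  constructor
  · intro h
    by_contra hle
    rw [SetLike.not_le_iff_exists] at hle
    obtain ⟨w, hwW, hwM⟩ := hle
    set M := Submodule.span K S with hM
    -- a functional vanishing on M with value 1 at w
    have hw0 : (Submodule.Quotient.mk w : V ⧸ M) ≠ 0 := by
      simpa [Submodule.Quotient.mk_eq_zero] using hwM
    obtain ⟨ψ, hψ⟩ : ∃ ψ : Module.Dual K (V ⧸ M), ψ (Submodule.Quotient.mk w) ≠ 0 := by
      by_contra hc
      push_neg at hc
      exact hw0 ((Module.forall_dual_apply_eq_zero_iff K _).mp hc)
    set φ : V →ₗ[K] K := (ψ (Submodule.Quotient.mk w))⁻¹ • (ψ ∘ₗ M.mkQ) with hφ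
    have hφw : φ w = 1 := by
      simp only [hφ, LinearMap.smul_apply, LinearMap.comp_apply, Submodule.mkQ_apply,
        smul_eq_mul]
      exact inv_mul_cancel₀ hψ
    have hφM : ∀ x ∈ M, φ x = 0 := by
      intro x hx
      simp only [hφ, LinearMap.smul_apply, LinearMap.comp_apply, Submodule.mkQ_apply,
        smul_eq_mul]
      rw [(Submodule.Quotient.mk_eq_zero M).mpr hx]
      simp
    -- find v with φ v = 1 and v ∉ W
    obtain ⟨v, hφv, hvW⟩ : ∃ v, φ v = 1 ∧ v ∉ W := by
      by_contra hc
      push_neg at hc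
      have hker : LinearMap.ker φ ≤ W := by
        intro x hx
        have hx0 : φ x = 0 := LinearMap.mem_ker.mp hx
        have h1 : φ (w + x) = 1 := by rw [map_add, hφw, hx0, add_zero]
        have h2 : w + x ∈ W := hc (w + x) h1
        have : (w + x) - w ∈ W := W.sub_mem h2 hwW
        simpa using this
      have htop : (⊤ : Submodule K V) ≤ W := by
        intro x _
        have h1 : x - φ x • w ∈ LinearMap.ker φ := by
          simp [LinearMap.mem_ker, map_sub, map_smul, hφw]
        have h2 : x - φ x • w ∈ W := hker h1
        have h3 : φ x • w ∈ W := W.smul_mem _ hwW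
        simpa using W.add_mem h2 h3
      have hWtop : W = ⊤ := top_le_iff.mp htop
      have : FiniteDimensional K (⊤ : Submodule K V) := hWtop ▸ hW
      exact hV (Submodule.topEquiv : (⊤ : Submodule K V) ≃ₗ[K] V).finiteDimensional
    -- the transvection-like automorphism e = id + φ ⬝ (v - w)
    set f : V →ₗ[K] V := φ.smulRight (v - w) with hf
    have hff : ∀ x, f (f x) = 0 := by
      intro x
      simp [hf, map_sub, hφv, hφw]
    have hcomp₁ : (LinearMap.id + f).comp (LinearMap.id - f) = LinearMap.id := by
      ext x
      simp only [LinearMap.comp_apply, LinearMap.add_apply, LinearMap.sub_apply,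
        LinearMap.id_apply, map_sub]
      rw [hff]
      abel
    have hcomp₂ : (LinearMap.id - f).comp (LinearMap.id + f) = LinearMap.id := by
      ext x
      simp only [LinearMap.comp_apply, LinearMap.add_apply, LinearMap.sub_apply,
        LinearMap.id_apply, map_add]
      rw [hff]
      abel
    set e : V ≃ₗ[K] V := LinearEquiv.ofLinear (LinearMap.id + f) (LinearMap.id - f)
      hcomp₁ hcomp₂ with he
    have heS : ∀ s ∈ S, e s = s := by
      intro s hs
      have : φ s = 0 := hφM s (Submodule.subset_span hs)
      simp [he, hf, this]
    have hmap := h e heS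
    have hew : e w = v := by
      simp only [he, hf, LinearEquiv.ofLinear_apply, LinearMap.add_apply, LinearMap.id_apply,
        LinearMap.smulRight_apply, hφw, one_smul]
      abel
    have : v ∈ Submodule.map (e : V →ₗ[K] V) W := ⟨w, hwW, hew⟩
    rw [hmap] at this
    exact hvW this
  · intro hle e he
    have hfix : ∀ x ∈ Submodule.span K S, e x = x := by
      intro x hx
      have hloc : Submodule.span K S ≤ LinearMap.eqLocus (e : V →ₗ[K] V) LinearMap.id :=
        Submodule.span_le.mpr (fun s hs => he s hs)
      exact hloc hx
    apply le_antisymm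
    · rintro _ ⟨y, hy, rfl⟩
      rw [LinearEquiv.coe_coe, hfix y (hle hy)]
      exact hy
    · intro y hy
      exact ⟨y, hy, hfix y (hle hy)⟩
end

section
/- Let K be a field, V an infinite-dimensional K-vector space, and W ⊆ V a finite-dimensional K-subspace with dim W ≥ 2. Then W has no least finite support: there is no finite set S ⊆ V such that (a) every linear automorphism of V fixing S pointwise maps W onto W, and (b) S ⊆ T for every finite set T ⊆ V such that every linear automorphism of V fixing T pointwise maps W onto W. -/
/-!
Every finite spanning set of `W` supports it, so a least support `S` would lie in the
intersection of any two bases of `W`. When `dim W ≥ 2`, replacing `b₀` by `b₀ + b₁` in a basis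
`b` gives a second basis meeting the first only in `{bᵢ | i ≠ 0}`, whose span `U` is a proper
subspace of `W`. Picking `w ∈ W \ U`, `u ∉ W` and a linear form `φ` vanishing on `U` with
`φ w ≠ 0`, the transvection `x ↦ x + φ x • v` with `φ v = 0` and `v ∉ W` fixes `U` pointwise
but moves `w` out of `W`, so `S` does not support `W`.
-/

open Module Submodule Set

section Semiring

variable {R M : Type*} [Semiring R] [AddCommMonoid M] [Module R M]

def Supports (S : Set M) (W : Submodule R M) : Prop :=
  ∀ e : M ≃ₗ[R] M, (∀ s ∈ S, e s = s) → W.map (e : M →ₗ[R] M) = W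

theorem supports_of_span_eq {T : Set M} {W : Submodule R M} (hT : span R T = W) :
    Supports T W := by
  intro e he
  rw [← hT, map_span, LinearEquiv.coe_coe, Set.image_congr he, Set.image_id']

end Semiring

theorem Submodule.span_insert_add_of_mem_span {R M : Type*} [Ring R] [AddCommGroup M]
    [Module R M] {s : Set M} {b : M} (a : M) (hb : b ∈ span R s) :
    span R (insert (a + b) s) = span R (insert a s) := by
  have key : ∀ a b, b ∈ span R s → span R (insert (a + b) s) ≤ span R (insert a s) :=
    fun a b hb ↦ span_le.2 <| Set.insert_subset_iff.2
      ⟨add_mem (subset_span (mem_insert a s)) (span_mono (subset_insert a s) hb),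
        subset_span.trans (span_mono (subset_insert a s))⟩
  refine le_antisymm (key a b hb) ?_
  simpa using key (a + b) (-b) (neg_mem hb)

theorem Set.insert_inter_insert_of_ne {α : Type*} {a b : α} (s : Set α) (hab : a ≠ b) :
    insert a s ∩ insert b s = s := by
  ext x
  simp only [mem_inter_iff, mem_insert_iff]
  grind

section Field

variable {K V : Type*} [Field K] [AddCommGroup V] [Module K V]

theorem not_supports_of_span_lt {S : Set V} {W : Submodule K V} (hW : W ≠ ⊤)
    (hSW : span K S < W) : ¬ Supports S W := by
  intro hS
  obtain ⟨w, hwW, hwS⟩ := SetLike.exists_of_lt hSW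
  obtain ⟨u, -, huW⟩ := SetLike.exists_of_lt hW.lt_top
  obtain ⟨φ, hφw, hSφ⟩ := exists_le_ker_of_notMem hwS
  set v := u - (φ u / φ w) • w
  have hφv : φ v = 0 := by simp [v, hφw]
  have hvW : v ∉ W := fun hv ↦ huW <| by
    simpa [v] using add_mem hv (W.smul_mem (φ u / φ w) hwW)
  let e := LinearEquiv.transvection hφv
  have he : e w ∉ W := fun hew ↦ hvW <| by
    rw [LinearEquiv.transvection.apply] at hew
    simpa [hφw] using W.smul_mem (φ w)⁻¹ ((W.add_mem_iff_right hwW).1 hew)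
  have hfix : ∀ s ∈ S, e s = s := fun s hs ↦ by
    rw [LinearEquiv.transvection.apply, show φ s = 0 from hSφ (subset_span hs), zero_smul,
      add_zero]
  exact he (hS e hfix ▸ mem_map_of_mem hwW)

theorem exists_finite_span_eq_inter_span_lt (W : Submodule K V) [FiniteDimensional K W]
    (hW : 2 ≤ finrank K W) :
    ∃ T₁ T₂ : Set V, T₁.Finite ∧ T₂.Finite ∧ span K T₁ = W ∧ span K T₂ = W ∧
      span K (T₁ ∩ T₂) < W := by
  let b := finBasis K W
  let f : Fin (finrank K W) → V := W.subtype ∘ b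
  have hf : LinearIndependent K f := b.linearIndependent.map' W.subtype W.ker_subtype
  have hspan : span K (range f) = W := by
    rw [Set.range_comp, ← map_span, b.span_eq, map_subtype_top]
  let i₀ : Fin (finrank K W) := ⟨0, by omega⟩
  let i₁ : Fin (finrank K W) := ⟨1, by omega⟩
  have hi : i₁ ∈ ({i₀}ᶜ : Set _) := by simp [i₀, i₁, Fin.ext_iff]
  refine ⟨range f, insert (f i₀ + f i₁) (f '' {i₀}ᶜ), finite_range f,
    (toFinite _).insert _, hspan, ?_, ?_⟩
  · rw [span_insert_add_of_mem_span _ (subset_span (mem_image_of_mem f hi)),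
      insert_image_compl_eq_range, hspan]
  · have hne : f i₀ ≠ f i₀ + f i₁ := by simpa using hf.ne_zero i₁
    rw [← insert_image_compl_eq_range f i₀, insert_inter_insert_of_ne _ hne]
    refine lt_of_le_of_ne ((span_mono (image_subset_range f _)).trans_eq hspan) fun h ↦ ?_
    exact hf.notMem_span_image (x := i₀) (s := {i₀}ᶜ) (by simp) (by rw [h]; exact (b i₀).2)

end Field

/-- In an infinite-dimensional vector space `V`, a finite-dimensional subspace `W` of
dimension at least `2` has no least finite support. -/
theorem stmt_16 (K : Type*) [Field K] (V : Type*) [AddCommGroup V] [Module K V]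
    (hV : ¬ FiniteDimensional K V)
    (W : Submodule K V) (hW : FiniteDimensional K W) (hdim : 2 ≤ Module.finrank K W) :
    ¬ ∃ S : Set V, S.Finite ∧
        (∀ e : V ≃ₗ[K] V, (∀ s ∈ S, e s = s) → Submodule.map (e : V →ₗ[K] V) W = W) ∧
        (∀ T : Set V, T.Finite →
          (∀ e : V ≃ₗ[K] V, (∀ s ∈ T, e s = s) → Submodule.map (e : V →ₗ[K] V) W = W) →
          S ⊆ T) := by
  rintro ⟨S, -, hS, hleast⟩
  have hW_ne_top : W ≠ ⊤ := by
    rintro rfl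
    exact hV (Module.Finite.equiv topEquiv)
  obtain ⟨T₁, T₂, hT₁, hT₂, hspan₁, hspan₂, hlt⟩ := exists_finite_span_eq_inter_span_lt W hdim
  have hST : S ⊆ T₁ ∩ T₂ := subset_inter (hleast T₁ hT₁ (supports_of_span_eq hspan₁))
    (hleast T₂ hT₂ (supports_of_span_eq hspan₂))
  exact not_supports_of_span_lt hW_ne_top ((span_mono hST).trans_lt hlt) hS
end

section
/- Let R ⊆ ℚ³ be the cyclic order relation: R(a,b,c) holds iff a<b<c or b<c<a or c<a<b. Let Vert = {(a,b,c) ∈ ℚ³ : R(a,b,c)} and let σ : Vert → Vert be the rotation σ(a,b,c) = (b,c,a). Then there is no bijection h : Vert → Vert such that (i) for every bijection π : ℚ → ℚ with R(a,b,c) ↔ R(π(a),π(b),π(c)) for all a,b,c, one has h(π(a),π(b),π(c)) = π·h(a,b,c) (where π acts coordinatewise), and (ii) h(σ(v)) = σ(σ(h(v))) for all v ∈ Vert. -/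
/-- The cyclic order relation on `ℚ`. -/
def CycR (a b c : ℚ) : Prop :=
  (a < b ∧ b < c) ∨ (b < c ∧ c < a) ∨ (c < a ∧ a < b)


lemma sq_ne_two (x : ℚ) : x ^ 2 ≠ 2 := by
  intro h
  have hirr := irrational_sqrt_two
  have hx : ((|x| : ℚ) : ℝ) = Real.sqrt 2 := by
    push_cast
    rw [← Real.sqrt_sq_eq_abs]
    congr 1
    exact_mod_cast h
  exact Rat.not_irrational |x| (hx ▸ hirr)

lemma two_sq_ne_one (x : ℚ) : 2 * x ^ 2 ≠ 1 := by
  intro h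
  apply sq_ne_two (2 * x)
  ring_nf
  nlinarith [h]

lemma CycR_asym {a b c : ℚ} (h1 : CycR a b c) (h2 : CycR a c b) : False := by
  rcases h1 with ⟨u, v⟩ | ⟨u, v⟩ | ⟨u, v⟩ <;>
    rcases h2 with ⟨s, t⟩ | ⟨s, t⟩ | ⟨s, t⟩ <;> linarith

lemma CycR_ne {a b c : ℚ} (h : CycR a b c) : a ≠ b ∧ b ≠ c ∧ a ≠ c := by
  refine ⟨?_, ?_, ?_⟩ <;> intro e <;> subst e <;>
    rcases h with ⟨u, v⟩ | ⟨u, v⟩ | ⟨u, v⟩ <;> linarith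

lemma CycR_total {a b c : ℚ} (hab : a ≠ b) (hbc : b ≠ c) (hac : a ≠ c) :
    CycR a b c ∨ CycR a c b := by
  unfold CycR
  rcases lt_trichotomy a b with h1 | h1 | h1 <;>
    rcases lt_trichotomy b c with h2 | h2 | h2 <;>
    rcases lt_trichotomy a c with h3 | h3 | h3 <;>
    first | tauto | linarith

/-- Master lemma: a "rotation" assembled from two monotone pieces preserves `CycR`. -/
lemma cyc_of (U : ℚ → Prop) (f : ℚ → ℚ)
    (hup : ∀ x y, U x → x ≤ y → U y)
    (hU : ∀ x y, U x → U y → x < y → f x < f y)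
    (hUc : ∀ x y, ¬U x → ¬U y → x < y → f x < f y)
    (hcross : ∀ x y, U x → ¬U y → f x < f y) :
    ∀ a b c, CycR a b c → CycR (f a) (f b) (f c) := by
  have key : ∀ x y, ¬U x → U y → x < y := by
    intro x y hx hy
    by_contra hc
    exact hx (hup y x hy (not_lt.1 hc))
  intro a b c h
  by_cases Ua : U a <;> by_cases Ub : U b <;> by_cases Uc : U c
  · -- TTT
    rcases h with ⟨u, v⟩ | ⟨u, v⟩ | ⟨u, v⟩
    · exact Or.inl ⟨hU _ _ Ua Ub u, hU _ _ Ub Uc v⟩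
    · exact Or.inr (Or.inl ⟨hU _ _ Ub Uc u, hU _ _ Uc Ua v⟩)
    · exact Or.inr (Or.inr ⟨hU _ _ Uc Ua u, hU _ _ Ua Ub v⟩)
  · -- TTF : c < a, c < b
    have h1 := key c a Uc Ua
    have h2 := key c b Uc Ub
    rcases h with ⟨u, v⟩ | ⟨u, v⟩ | ⟨u, v⟩
    · linarith
    · linarith
    · exact Or.inl ⟨hU _ _ Ua Ub v, hcross _ _ Ub Uc⟩
  · -- TFT : b < a, b < c
    have h1 := key b a Ub Ua
    have h2 := key b c Ub Uc
    rcases h with ⟨u, v⟩ | ⟨u, v⟩ | ⟨u, v⟩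
    · linarith
    · exact Or.inr (Or.inr ⟨hU _ _ Uc Ua v, hcross _ _ Ua Ub⟩)
    · linarith
  · -- TFF : b < a, c < a
    have h1 := key b a Ub Ua
    have h2 := key c a Uc Ua
    rcases h with ⟨u, v⟩ | ⟨u, v⟩ | ⟨u, v⟩
    · linarith
    · exact Or.inl ⟨hcross _ _ Ua Ub, hUc _ _ Ub Uc u⟩
    · linarith
  · -- FTT : a < b, a < c
    have h1 := key a b Ua Ub
    have h2 := key a c Ua Uc
    rcases h with ⟨u, v⟩ | ⟨u, v⟩ | ⟨u, v⟩
    · exact Or.inr (Or.inl ⟨hU _ _ Ub Uc v, hcross _ _ Uc Ua⟩)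
    · linarith
    · linarith
  · -- FTF : a < b, c < b
    have h1 := key a b Ua Ub
    have h2 := key c b Uc Ub
    rcases h with ⟨u, v⟩ | ⟨u, v⟩ | ⟨u, v⟩
    · linarith
    · linarith
    · exact Or.inr (Or.inl ⟨hcross _ _ Ub Uc, hUc _ _ Uc Ua u⟩)
  · -- FFT : a < c, b < c
    have h1 := key a c Ua Uc
    have h2 := key b c Ub Uc
    rcases h with ⟨u, v⟩ | ⟨u, v⟩ | ⟨u, v⟩
    · exact Or.inr (Or.inr ⟨hcross _ _ Uc Ua, hUc _ _ Ua Ub u⟩)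
    · linarith
    · linarith
  · -- FFF
    rcases h with ⟨u, v⟩ | ⟨u, v⟩ | ⟨u, v⟩
    · exact Or.inl ⟨hUc _ _ Ua Ub u, hUc _ _ Ub Uc v⟩
    · exact Or.inr (Or.inl ⟨hUc _ _ Ub Uc u, hUc _ _ Uc Ua v⟩)
    · exact Or.inr (Or.inr ⟨hUc _ _ Uc Ua u, hUc _ _ Ua Ub v⟩)

lemma cyc_iff (f : ℚ → ℚ) (hinj : Function.Injective f)
    (hfwd : ∀ a b c, CycR a b c → CycR (f a) (f b) (f c)) :
    ∀ a b c, CycR a b c ↔ CycR (f a) (f b) (f c) := by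
  intro a b c
  refine ⟨hfwd a b c, fun h => ?_⟩
  obtain ⟨n1, n2, n3⟩ := CycR_ne h
  have hab : a ≠ b := fun e => n1 (by rw [e])
  have hbc : b ≠ c := fun e => n2 (by rw [e])
  have hac : a ≠ c := fun e => n3 (by rw [e])
  rcases CycR_total hab hbc hac with h' | h'
  · exact h'
  · exact absurd h (fun hh => CycR_asym hh (hfwd a c b h'))

def fixPi (x : ℚ) : ℚ :=
  if x ≤ 0 then 2 * x
  else if x ≤ 2/3 then x / 2
  else if x ≤ 1 then 2 * x - 1
  else if x ≤ 5/3 then (x + 1) / 2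
  else 2 * x - 2

def fixPiInv (y : ℚ) : ℚ :=
  if y ≤ 0 then y / 2
  else if y ≤ 1/3 then 2 * y
  else if y ≤ 1 then (y + 1) / 2
  else if y ≤ 4/3 then 2 * y - 1
  else (y + 2) / 2

lemma fixPi_left : Function.LeftInverse fixPiInv fixPi := by
  intro x
  unfold fixPi fixPiInv
  split_ifs <;> linarith

lemma fixPi_right : Function.RightInverse fixPiInv fixPi := by
  intro y
  unfold fixPi fixPiInv
  split_ifs <;> linarith

lemma fixPi_bij : Function.Bijective fixPi :=
  ⟨fixPi_left.injective, fixPi_right.surjective⟩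

lemma fixPi_mono : StrictMono fixPi := by
  intro x y hxy
  unfold fixPi
  split_ifs <;> linarith

lemma fixPi_fixed {x : ℚ} (h : fixPi x = x) : x = 0 ∨ x = 1 ∨ x = 2 := by
  unfold fixPi at h
  split_ifs at h with h1 h2 h3 h4
  · left; linarith
  · left; linarith
  · right; left; linarith
  · right; left; linarith
  · right; right; linarith

lemma fixPi_zero : fixPi 0 = 0 := by norm_num [fixPi]
lemma fixPi_one : fixPi 1 = 1 := by norm_num [fixPi]
lemma fixPi_two : fixPi 2 = 2 := by norm_num [fixPi]

-- the six interval types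
abbrev TqA := {x : ℚ // x < 0}
abbrev TqA' := {x : ℚ // 0 < x ∧ 1 < 2 * x ^ 2 ∧ x < 1}
abbrev TqC := {x : ℚ // 1 < x ∧ x ^ 2 < 2}
abbrev TqC' := {x : ℚ // 2 < x}
abbrev TqD := {x : ℚ // 0 < x ∧ 2 < x ^ 2 ∧ x < 2}
abbrev TqE' := {x : ℚ // 0 < x ∧ 2 * x ^ 2 < 1}

instance : Nonempty TqA := ⟨⟨-1, by norm_num⟩⟩
instance : Nonempty TqA' := ⟨⟨3/4, by norm_num⟩⟩
instance : Nonempty TqC := ⟨⟨5/4, by norm_num⟩⟩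
instance : Nonempty TqC' := ⟨⟨3, by norm_num⟩⟩
instance : Nonempty TqD := ⟨⟨3/2, by norm_num⟩⟩
instance : Nonempty TqE' := ⟨⟨1/2, by norm_num⟩⟩

instance : DenselyOrdered TqA := ⟨by
  rintro ⟨a, ha⟩ ⟨b, hb⟩ hab
  rw [Subtype.mk_lt_mk] at hab
  exact ⟨⟨(a + b) / 2, by linarith⟩, Subtype.mk_lt_mk.2 (by linarith),
    Subtype.mk_lt_mk.2 (by linarith)⟩⟩

instance : NoMaxOrder TqA := ⟨by
  rintro ⟨a, ha⟩
  exact ⟨⟨a / 2, by linarith⟩, Subtype.mk_lt_mk.2 (by linarith)⟩⟩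

instance : NoMinOrder TqA := ⟨by
  rintro ⟨a, ha⟩
  exact ⟨⟨a - 1, by linarith⟩, Subtype.mk_lt_mk.2 (by linarith)⟩⟩

instance : DenselyOrdered TqA' := ⟨by
  rintro ⟨a, ha1, ha2, ha3⟩ ⟨b, hb1, hb2, hb3⟩ hab
  rw [Subtype.mk_lt_mk] at hab
  exact ⟨⟨(a + b) / 2, by linarith, by nlinarith, by linarith⟩,
    Subtype.mk_lt_mk.2 (by linarith), Subtype.mk_lt_mk.2 (by linarith)⟩⟩

instance : NoMaxOrder TqA' := ⟨by
  rintro ⟨a, ha1, ha2, ha3⟩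
  exact ⟨⟨(a + 1) / 2, by linarith, by nlinarith, by linarith⟩,
    Subtype.mk_lt_mk.2 (by linarith)⟩⟩

instance : NoMinOrder TqA' := ⟨by
  rintro ⟨a, ha1, ha2, ha3⟩
  refine ⟨⟨a - (2 * a ^ 2 - 1) / 8, ?_, ?_, ?_⟩, Subtype.mk_lt_mk.2 (by nlinarith)⟩
  · nlinarith
  · nlinarith
  · nlinarith⟩

instance : DenselyOrdered TqC := ⟨by
  rintro ⟨a, ha1, ha2⟩ ⟨b, hb1, hb2⟩ hab
  rw [Subtype.mk_lt_mk] at hab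
  exact ⟨⟨(a + b) / 2, by linarith, by nlinarith⟩,
    Subtype.mk_lt_mk.2 (by linarith), Subtype.mk_lt_mk.2 (by linarith)⟩⟩

instance : NoMaxOrder TqC := ⟨by
  rintro ⟨a, ha1, ha2⟩
  have h3 : a < 3/2 := by nlinarith
  have h5 : 0 < (2 - a ^ 2) / 8 := by nlinarith
  have h4 : (2 - a ^ 2) / 8 ≤ 1/8 := by nlinarith
  have h6 : a * ((2 - a ^ 2) / 8) < (3/2) * ((2 - a ^ 2) / 8) :=
    mul_lt_mul_of_pos_right h3 h5
  have h7 : ((2 - a ^ 2) / 8) * ((2 - a ^ 2) / 8) ≤ (1/8) * ((2 - a ^ 2) / 8) :=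
    mul_le_mul_of_nonneg_right h4 (le_of_lt h5)
  refine ⟨⟨a + (2 - a ^ 2) / 8, by nlinarith, by nlinarith⟩,
    Subtype.mk_lt_mk.2 (by nlinarith)⟩⟩

instance : NoMinOrder TqC := ⟨by
  rintro ⟨a, ha1, ha2⟩
  exact ⟨⟨(a + 1) / 2, by linarith, by nlinarith⟩, Subtype.mk_lt_mk.2 (by linarith)⟩⟩

instance : DenselyOrdered TqC' := ⟨by
  rintro ⟨a, ha⟩ ⟨b, hb⟩ hab
  rw [Subtype.mk_lt_mk] at hab
  exact ⟨⟨(a + b) / 2, by linarith⟩, Subtype.mk_lt_mk.2 (by linarith),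
    Subtype.mk_lt_mk.2 (by linarith)⟩⟩

instance : NoMaxOrder TqC' := ⟨by
  rintro ⟨a, ha⟩
  exact ⟨⟨a + 1, by linarith⟩, Subtype.mk_lt_mk.2 (by linarith)⟩⟩

instance : NoMinOrder TqC' := ⟨by
  rintro ⟨a, ha⟩
  exact ⟨⟨(a + 2) / 2, by linarith⟩, Subtype.mk_lt_mk.2 (by linarith)⟩⟩

instance : DenselyOrdered TqD := ⟨by
  rintro ⟨a, ha1, ha2, ha3⟩ ⟨b, hb1, hb2, hb3⟩ hab
  rw [Subtype.mk_lt_mk] at hab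
  exact ⟨⟨(a + b) / 2, by linarith, by nlinarith, by linarith⟩,
    Subtype.mk_lt_mk.2 (by linarith), Subtype.mk_lt_mk.2 (by linarith)⟩⟩

instance : NoMaxOrder TqD := ⟨by
  rintro ⟨a, ha1, ha2, ha3⟩
  exact ⟨⟨(a + 2) / 2, by linarith, by nlinarith, by linarith⟩,
    Subtype.mk_lt_mk.2 (by linarith)⟩⟩

instance : NoMinOrder TqD := ⟨by
  rintro ⟨a, ha1, ha2, ha3⟩
  refine ⟨⟨a - (a ^ 2 - 2) / 8, ?_, ?_, ?_⟩, Subtype.mk_lt_mk.2 (by nlinarith)⟩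
  · nlinarith
  · nlinarith
  · nlinarith⟩

instance : DenselyOrdered TqE' := ⟨by
  rintro ⟨a, ha1, ha2⟩ ⟨b, hb1, hb2⟩ hab
  rw [Subtype.mk_lt_mk] at hab
  exact ⟨⟨(a + b) / 2, by linarith, by nlinarith⟩,
    Subtype.mk_lt_mk.2 (by linarith), Subtype.mk_lt_mk.2 (by linarith)⟩⟩

instance : NoMaxOrder TqE' := ⟨by
  rintro ⟨a, ha1, ha2⟩
  have h3 : a < 1 := by nlinarith
  have h5 : 0 < (1 - 2 * a ^ 2) / 8 := by nlinarith
  have h4 : (1 - 2 * a ^ 2) / 8 ≤ 1/8 := by nlinarith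
  have h6 : a * ((1 - 2 * a ^ 2) / 8) < 1 * ((1 - 2 * a ^ 2) / 8) :=
    mul_lt_mul_of_pos_right h3 h5
  have h7 : ((1 - 2 * a ^ 2) / 8) * ((1 - 2 * a ^ 2) / 8) ≤ (1/8) * ((1 - 2 * a ^ 2) / 8) :=
    mul_le_mul_of_nonneg_right h4 (le_of_lt h5)
  refine ⟨⟨a + (1 - 2 * a ^ 2) / 8, by nlinarith, by nlinarith⟩,
    Subtype.mk_lt_mk.2 (by nlinarith)⟩⟩

instance : NoMinOrder TqE' := ⟨by
  rintro ⟨a, ha1, ha2⟩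
  exact ⟨⟨a / 2, by linarith, by nlinarith⟩, Subtype.mk_lt_mk.2 (by linarith)⟩⟩

noncomputable def isoA : TqA ≃o TqA' := (Order.iso_of_countable_dense TqA TqA').some
noncomputable def isoC : TqC ≃o TqC' := (Order.iso_of_countable_dense TqC TqC').some
noncomputable def isoD : TqD ≃o TqA := (Order.iso_of_countable_dense TqD TqA).some
noncomputable def isoE : TqC' ≃o TqE' := (Order.iso_of_countable_dense TqC' TqE').some

noncomputable def rho (x : ℚ) : ℚ :=
  if hA : x < 0 then (isoA ⟨x, hA⟩).val
  else if hB : x ≤ 1 then x + 1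
  else if hC : x ^ 2 < 2 then (isoC ⟨x, not_le.1 hB, hC⟩).val
  else if hD : x < 2 then
    (isoD ⟨x, by linarith [not_le.1 hB],
      (not_lt.1 hC).lt_of_ne (Ne.symm (sq_ne_two x)), hD⟩).val
  else if _hE : x = 2 then 0
  else (isoE ⟨x, (not_lt.1 hD).lt_of_ne (Ne.symm _hE)⟩).val

noncomputable def rhoInv (y : ℚ) : ℚ :=
  if hA : y < 0 then (isoD.symm ⟨y, hA⟩).val
  else if hB : y = 0 then 2
  else if hC : 2 * y ^ 2 < 1 then
    (isoE.symm ⟨y, (not_lt.1 hA).lt_of_ne (Ne.symm hB), hC⟩).val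
  else if hD : y < 1 then
    (isoA.symm ⟨y, (not_lt.1 hA).lt_of_ne (Ne.symm hB),
      (not_lt.1 hC).lt_of_ne ((two_sq_ne_one y).symm), hD⟩).val
  else if hE : y ≤ 2 then y - 1
  else (isoC.symm ⟨y, not_le.1 hE⟩).val

lemma rho_eqA {x : ℚ} (h : x < 0) : rho x = (isoA ⟨x, h⟩).val := by
  unfold rho; rw [dif_pos h]

lemma rho_eqB {x : ℚ} (h0 : 0 ≤ x) (h1 : x ≤ 1) : rho x = x + 1 := by
  unfold rho; rw [dif_neg (not_lt.2 h0), dif_pos h1]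

lemma rho_eqC {x : ℚ} (h1 : 1 < x) (h2 : x ^ 2 < 2) :
    rho x = (isoC ⟨x, h1, h2⟩).val := by
  unfold rho
  rw [dif_neg (by linarith : ¬x < 0), dif_neg (not_le.2 h1), dif_pos h2]

lemma rho_eqD {x : ℚ} (h0 : 0 < x) (h2 : 2 < x ^ 2) (h3 : x < 2) :
    rho x = (isoD ⟨x, h0, h2, h3⟩).val := by
  have h1 : 1 < x := by nlinarith
  unfold rho
  rw [dif_neg (by linarith : ¬x < 0), dif_neg (not_le.2 h1),
    dif_neg (not_lt.2 (le_of_lt h2)), dif_pos h3]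

lemma rho_eqE : rho 2 = 0 := by norm_num [rho]

lemma rho_eqF {x : ℚ} (h : 2 < x) : rho x = (isoE ⟨x, h⟩).val := by
  unfold rho
  rw [dif_neg (by linarith : ¬x < 0), dif_neg (by linarith : ¬x ≤ 1),
    dif_neg (by nlinarith : ¬x ^ 2 < 2), dif_neg (by linarith : ¬x < 2),
    dif_neg (by linarith : ¬x = 2)]

lemma rho_zero : rho 0 = 1 := by norm_num [rho]
lemma rho_one : rho 1 = 2 := by norm_num [rho]

lemma rho_region (x : ℚ) :
    x < 0 ∨ (0 ≤ x ∧ x ≤ 1) ∨ (1 < x ∧ x ^ 2 < 2) ∨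
      (0 < x ∧ 2 < x ^ 2 ∧ x < 2) ∨ x = 2 ∨ 2 < x := by
  rcases lt_or_ge x 0 with h | h
  · exact Or.inl h
  rcases le_or_gt x 1 with h1 | h1
  · exact Or.inr (Or.inl ⟨h, h1⟩)
  rcases lt_trichotomy (x ^ 2) 2 with h2 | h2 | h2
  · exact Or.inr (Or.inr (Or.inl ⟨h1, h2⟩))
  · exact absurd h2 (sq_ne_two x)
  rcases lt_trichotomy x 2 with h3 | h3 | h3
  · exact Or.inr (Or.inr (Or.inr (Or.inl ⟨by linarith, h2, h3⟩)))
  · exact Or.inr (Or.inr (Or.inr (Or.inr (Or.inl h3))))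
  · exact Or.inr (Or.inr (Or.inr (Or.inr (Or.inr h3))))

lemma rho_hi {x : ℚ} (h : ¬(1 < x ∧ 2 < x ^ 2)) :
    0 < rho x ∧ 1 < 2 * (rho x) ^ 2 := by
  rcases rho_region x with hx | ⟨hx0, hx1⟩ | ⟨hx0, hx1⟩ | ⟨hx0, hx1, hx2⟩ | hx | hx
  · rw [rho_eqA hx]
    exact ⟨(isoA ⟨x, hx⟩).2.1, (isoA ⟨x, hx⟩).2.2.1⟩
  · rw [rho_eqB hx0 hx1]
    constructor <;> nlinarith
  · rw [rho_eqC hx0 hx1]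
    have := (isoC ⟨x, hx0, hx1⟩).2
    constructor <;> nlinarith
  · exact absurd ⟨by nlinarith, hx1⟩ h
  · exact absurd ⟨by rw [hx]; norm_num, by rw [hx]; norm_num⟩ h
  · exact absurd ⟨by linarith, by nlinarith⟩ h

lemma rho_lo {x : ℚ} (h1 : 1 < x) (h2 : 2 < x ^ 2) :
    rho x ≤ 0 ∨ (0 < rho x ∧ 2 * (rho x) ^ 2 < 1) := by
  rcases rho_region x with hx | ⟨hx0, hx1⟩ | ⟨hx0, hx1⟩ | ⟨hx0, hx1, hx2⟩ | hx | hx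
  · linarith
  · linarith
  · linarith
  · rw [rho_eqD hx0 hx1 hx2]
    exact Or.inl (le_of_lt (isoD ⟨x, hx0, hx1, hx2⟩).2)
  · rw [hx, rho_eqE]
    exact Or.inl le_rfl
  · rw [rho_eqF hx]
    exact Or.inr ⟨(isoE ⟨x, hx⟩).2.1, (isoE ⟨x, hx⟩).2.2⟩

lemma rho_monoU {x y : ℚ} (hUx : 1 < x ∧ 2 < x ^ 2) (hUy : 1 < y ∧ 2 < y ^ 2)
    (hxy : x < y) : rho x < rho y := by
  obtain ⟨hu1, hu2⟩ := hUx
  obtain ⟨hv1, hv2⟩ := hUy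
  rcases rho_region x with hx | ⟨hx0, hx1⟩ | ⟨hx0, hx1⟩ | ⟨hx0, hx1, hx2⟩ | rfl | hx <;>
    rcases rho_region y with hy | ⟨hy0, hy1⟩ | ⟨hy0, hy1⟩ | ⟨hy0, hy1, hy2⟩ | rfl | hy <;>
    first
      | linarith
      | skip
  · rw [rho_eqD hx0 hx1 hx2, rho_eqD hy0 hy1 hy2]
    exact Subtype.coe_lt_coe.2 (isoD.lt_iff_lt.2 (Subtype.mk_lt_mk.2 hxy))
  · rw [rho_eqD hx0 hx1 hx2, rho_eqE]
    exact (isoD ⟨x, hx0, hx1, hx2⟩).2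
  · rw [rho_eqD hx0 hx1 hx2, rho_eqF hy]
    exact lt_trans (isoD ⟨x, hx0, hx1, hx2⟩).2 (isoE ⟨y, hy⟩).2.1
  · rw [rho_eqE, rho_eqF hy]
    exact (isoE ⟨y, hy⟩).2.1
  · rw [rho_eqF hx, rho_eqF hy]
    exact Subtype.coe_lt_coe.2 (isoE.lt_iff_lt.2 (Subtype.mk_lt_mk.2 hxy))

lemma rho_monoUc {x y : ℚ} (hUx : ¬(1 < x ∧ 2 < x ^ 2)) (hUy : ¬(1 < y ∧ 2 < y ^ 2))
    (hxy : x < y) : rho x < rho y := by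
  have killD : ∀ z : ℚ, 0 < z → 2 < z ^ 2 → z < 2 → ¬(1 < z ∧ 2 < z ^ 2) → False := by
    intro z h0 h2 _ hn; exact hn ⟨by nlinarith, h2⟩
  rcases rho_region x with hx | ⟨hx0, hx1⟩ | ⟨hx0, hx1⟩ | ⟨hx0, hx1, hx2⟩ | rfl | hx <;>
    rcases rho_region y with hy | ⟨hy0, hy1⟩ | ⟨hy0, hy1⟩ | ⟨hy0, hy1, hy2⟩ | rfl | hy <;>
    first
      | linarith
      | (refine absurd ⟨?_, ?_⟩ hUx <;> nlinarith)
      | (refine absurd ⟨?_, ?_⟩ hUy <;> nlinarith)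
      | (refine absurd ⟨?_, ?_⟩ hUx <;> (norm_num; done))
      | (refine absurd ⟨?_, ?_⟩ hUy <;> (norm_num; done))
      | skip
  · rw [rho_eqA hx, rho_eqA hy]
    exact Subtype.coe_lt_coe.2 (isoA.lt_iff_lt.2 (Subtype.mk_lt_mk.2 hxy))
  · rw [rho_eqA hx, rho_eqB hy0 hy1]
    have := (isoA ⟨x, hx⟩).2.2.2
    linarith
  · rw [rho_eqA hx, rho_eqC hy0 hy1]
    have h1 := (isoA ⟨x, hx⟩).2.2.2
    have h2 := (isoC ⟨y, hy0, hy1⟩).2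
    linarith
  · rw [rho_eqB hx0 hx1, rho_eqB hy0 hy1]
    linarith
  · rw [rho_eqB hx0 hx1, rho_eqC hy0 hy1]
    have := (isoC ⟨y, hy0, hy1⟩).2
    linarith
  · rw [rho_eqC hx0 hx1, rho_eqC hy0 hy1]
    exact Subtype.coe_lt_coe.2 (isoC.lt_iff_lt.2 (Subtype.mk_lt_mk.2 hxy))

lemma rho_cross {x y : ℚ} (hUx : 1 < x ∧ 2 < x ^ 2) (hUy : ¬(1 < y ∧ 2 < y ^ 2)) :
    rho x < rho y := by
  obtain ⟨hy1, hy2⟩ := rho_hi hUy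
  rcases rho_lo hUx.1 hUx.2 with h | ⟨h1, h2⟩
  · linarith
  · nlinarith

lemma rho_fwd : ∀ a b c, CycR a b c → CycR (rho a) (rho b) (rho c) := by
  apply cyc_of (fun x => 1 < x ∧ 2 < x ^ 2)
  · intro x y hx hxy
    exact ⟨by linarith [hx.1], by nlinarith [hx.2, hx.1]⟩
  · intro x y hx hy h; exact rho_monoU hx hy h
  · intro x y hx hy h; exact rho_monoUc hx hy h
  · intro x y hx hy; exact rho_cross hx hy

lemma rho_left : Function.LeftInverse rhoInv rho := by
  intro x
  rcases rho_region x with hx | ⟨hx0, hx1⟩ | ⟨hx0, hx1⟩ | ⟨hx0, hx1, hx2⟩ | hx | hx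
  · rw [rho_eqA hx]
    obtain ⟨m1, m2, m3⟩ := (isoA ⟨x, hx⟩).2
    unfold rhoInv
    rw [dif_neg (by linarith : ¬(isoA ⟨x, hx⟩).val < 0),
      dif_neg (by intro h; rw [h] at m1; exact lt_irrefl 0 m1),
      dif_neg (by linarith : ¬2 * (isoA ⟨x, hx⟩).val ^ 2 < 1), dif_pos m3]
    rw [Subtype.coe_eta, OrderIso.symm_apply_apply]
  · rw [rho_eqB hx0 hx1]
    unfold rhoInv
    rw [dif_neg (by linarith : ¬x + 1 < 0),
      dif_neg (by intro h; linarith : ¬x + 1 = 0),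
      dif_neg (by nlinarith : ¬2 * (x + 1) ^ 2 < 1),
      dif_neg (by linarith : ¬x + 1 < 1), dif_pos (by linarith : x + 1 ≤ 2)]
    ring
  · rw [rho_eqC hx0 hx1]
    have m := (isoC ⟨x, hx0, hx1⟩).2
    unfold rhoInv
    rw [dif_neg (by linarith : ¬(isoC ⟨x, hx0, hx1⟩).val < 0),
      dif_neg (by intro h; rw [h] at m; linarith),
      dif_neg (by nlinarith : ¬2 * (isoC ⟨x, hx0, hx1⟩).val ^ 2 < 1),
      dif_neg (by linarith : ¬(isoC ⟨x, hx0, hx1⟩).val < 1),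
      dif_neg (by linarith : ¬(isoC ⟨x, hx0, hx1⟩).val ≤ 2)]
    rw [Subtype.coe_eta, OrderIso.symm_apply_apply]
  · rw [rho_eqD hx0 hx1 hx2]
    have m := (isoD ⟨x, hx0, hx1, hx2⟩).2
    unfold rhoInv
    rw [dif_pos m, Subtype.coe_eta, OrderIso.symm_apply_apply]
  · rw [hx, rho_eqE]
    unfold rhoInv
    rw [dif_neg (lt_irrefl 0), dif_pos rfl]
  · rw [rho_eqF hx]
    obtain ⟨m1, m2⟩ := (isoE ⟨x, hx⟩).2
    unfold rhoInv
    rw [dif_neg (by linarith : ¬(isoE ⟨x, hx⟩).val < 0),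
      dif_neg (by intro h; rw [h] at m1; exact lt_irrefl 0 m1), dif_pos m2]
    rw [Subtype.coe_eta, OrderIso.symm_apply_apply]

lemma rho_right : Function.RightInverse rhoInv rho := by
  intro y
  unfold rhoInv
  split_ifs with hA hB hC hD hE
  · obtain ⟨m1, m2, m3⟩ := (isoD.symm ⟨y, hA⟩).2
    rw [rho_eqD m1 m2 m3, Subtype.coe_eta, OrderIso.apply_symm_apply]
  · rw [rho_eqE, hB]
  · have m := (isoE.symm ⟨y, (not_lt.1 hA).lt_of_ne (Ne.symm hB), hC⟩).2
    rw [rho_eqF m, Subtype.coe_eta, OrderIso.apply_symm_apply]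
  · have m := (isoA.symm ⟨y, (not_lt.1 hA).lt_of_ne (Ne.symm hB),
      (not_lt.1 hC).lt_of_ne ((two_sq_ne_one y).symm), hD⟩).2
    rw [rho_eqA m, Subtype.coe_eta, OrderIso.apply_symm_apply]
  · rw [rho_eqB (by linarith) (by linarith)]
    ring
  · obtain ⟨m1, m2⟩ := (isoC.symm ⟨y, not_le.1 hE⟩).2
    rw [rho_eqC m1 m2, Subtype.coe_eta, OrderIso.apply_symm_apply]

lemma rho_bij : Function.Bijective rho := ⟨rho_left.injective, rho_right.surjective⟩

lemma rho_pres : ∀ a b c : ℚ, CycR a b c ↔ CycR (rho a) (rho b) (rho c) :=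
  cyc_iff rho rho_left.injective rho_fwd

lemma rho_two : rho 2 = 0 := rho_eqE

/-- Vertices: triples of rationals in cyclic order. -/
def CycVert : Type :=
  {p : ℚ × ℚ × ℚ // CycR p.1 p.2.1 p.2.2}

/-- The rotation `(a,b,c) ↦ (b,c,a)` on vertices. -/
def cycRot (v : CycVert) : CycVert :=
  ⟨(v.1.2.1, v.1.2.2, v.1.1), by
    rcases v.2 with h | h | h
    · exact Or.inr (Or.inr h)
    · exact Or.inl h
    · exact Or.inr (Or.inl h)⟩


def v0 : CycVert := ⟨(0, 1, 2), by norm_num [CycR]⟩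

lemma fixPi_pres : ∀ a b c : ℚ, CycR a b c ↔ CycR (fixPi a) (fixPi b) (fixPi c) :=
  cyc_iff fixPi fixPi_bij.1
    (cyc_of (fun _ => False) fixPi (fun _ _ hx _ => hx.elim) (fun _ _ hx => hx.elim)
      (fun _ _ _ _ hxy => fixPi_mono hxy) (fun _ _ hx _ => hx.elim))

/-- There is no equivariant (`∅`-definable) isomorphism between the graph of directed
triangles `v → σ v` and the reversed graph `v → σ² v` over the cyclic order atoms. -/
theorem stmt_18 :
    ¬ ∃ h : CycVert → CycVert, Function.Bijective h ∧
        (∀ π : ℚ → ℚ, Function.Bijective π →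
          (∀ a b c : ℚ, CycR a b c ↔ CycR (π a) (π b) (π c)) →
          ∀ v w : CycVert, w.1 = (π v.1.1, π v.1.2.1, π v.1.2.2) →
            (h w).1 = (π (h v).1.1, π (h v).1.2.1, π (h v).1.2.2)) ∧
        (∀ v : CycVert, h (cycRot v) = cycRot (cycRot (h v))) := by
  rintro ⟨h, -, hequiv, hrot⟩
  have hfix := hequiv fixPi fixPi_bij fixPi_pres v0 v0
    (by show ((0 : ℚ), (1 : ℚ), (2 : ℚ)) = (fixPi 0, fixPi 1, fixPi 2)
        rw [fixPi_zero, fixPi_one, fixPi_two])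
  have e1 : (h v0).1.1 = fixPi ((h v0).1.1) := congrArg Prod.fst hfix
  have e2 : (h v0).1.2.1 = fixPi ((h v0).1.2.1) := congrArg (fun p => p.2.1) hfix
  have e3 : (h v0).1.2.2 = fixPi ((h v0).1.2.2) := congrArg (fun p => p.2.2) hfix
  have hr : (h (cycRot v0)).1 =
      (rho ((h v0).1.1), rho ((h v0).1.2.1), rho ((h v0).1.2.2)) :=
    hequiv rho rho_bij rho_pres v0 (cycRot v0)
      (by show ((1 : ℚ), (2 : ℚ), (0 : ℚ)) = (rho 0, rho 1, rho 2)
          rw [rho_zero, rho_one, rho_two])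
  have hrot0 := hrot v0
  have k1 : (h v0).1.2.2 = rho ((h v0).1.1) := by
    have t := congrArg Prod.fst hr
    rw [hrot0] at t
    exact t
  have hcyc : CycR ((h v0).1.1) ((h v0).1.2.1) ((h v0).1.2.2) := (h v0).2
  rcases fixPi_fixed e1.symm with h1 | h1 | h1 <;>
    rcases fixPi_fixed e2.symm with h2 | h2 | h2 <;>
    rcases fixPi_fixed e3.symm with h3 | h3 | h3 <;>
    simp only [h1, h2, h3] at hcyc k1 <;>
    first
      | (norm_num [CycR] at hcyc; done)
      | (rw [rho_zero] at k1; norm_num at k1; done)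
      | (rw [rho_one] at k1; norm_num at k1; done)
      | (rw [rho_two] at k1; norm_num at k1; done)
end

section
/- Let R ⊆ ℚ³ be the cyclic order relation: R(a,b,c) holds iff a<b<c or b<c<a or c<a<b. Let Vert = {(a,b,c) ∈ ℚ³ : R(a,b,c)} and let σ : Vert → Vert be the rotation σ(a,b,c) = (b,c,a). Then for every d ∈ ℚ there exists a bijection h : Vert → Vert such that (i) for every bijection π : ℚ → ℚ with π(d) = d and R(a,b,c) ↔ R(π(a),π(b),π(c)) for all a,b,c, one has h(π(a),π(b),π(c)) = π·h(a,b,c) (where π acts coordinatewise), and (ii) h(σ(v)) = σ(σ(h(v))) for all v ∈ Vert. -/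
/-- `d` lies in the half-open cyclic arc `[a, b)` of the triple. -/
def CycPos (d a b c : ℚ) : Prop := d = a ∨ CycR a d b

lemma cycR_rot {a b c : ℚ} (h : CycR a b c) : CycR b c a := by
  unfold CycR at *; tauto

set_option maxHeartbeats 1600000 in
lemma cycPos_total {d a b c : ℚ} (h : CycR a b c) :
    CycPos d a b c ∨ CycPos d b c a ∨ CycPos d c a b := by
  unfold CycPos CycR
  rcases h with ⟨p, q⟩ | ⟨p, q⟩ | ⟨p, q⟩ <;>
    [have r : a < c := lt_trans p q; have r : b < a := lt_trans p q;
     have r : c < b := lt_trans p q] <;>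
    rcases lt_trichotomy d a with t1 | t1 | t1 <;>
    rcases lt_trichotomy d b with t2 | t2 | t2 <;>
    rcases lt_trichotomy d c with t3 | t3 | t3 <;>
    first | (exfalso; linarith) | tauto

lemma cycPos_excl {d a b c : ℚ} (h : CycR a b c)
    (h0 : CycPos d a b c) (h1 : CycPos d b c a) : False := by
  unfold CycPos CycR at h0 h1
  rcases h with ⟨p, q⟩ | ⟨p, q⟩ | ⟨p, q⟩ <;>
    rcases h0 with rfl | ⟨u, v⟩ | ⟨u, v⟩ | ⟨u, v⟩ <;>
    rcases h1 with h1 | ⟨x, y⟩ | ⟨x, y⟩ | ⟨x, y⟩ <;>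
    (try subst h1) <;> linarith

open Classical in
/-- The isomorphism: rotate each triple according to the arc containing `d`. -/
noncomputable def hFun (d : ℚ) (v : CycVert) : CycVert :=
  if CycPos d v.1.1 v.1.2.1 v.1.2.2 then v
  else if CycPos d v.1.2.1 v.1.2.2 v.1.1 then cycRot (cycRot v)
  else cycRot v

lemma hFun_eq0 (d : ℚ) (v : CycVert) (h : CycPos d v.1.1 v.1.2.1 v.1.2.2) :
    hFun d v = v := by simp [hFun, h]

lemma hFun_eq1 (d : ℚ) (v : CycVert) (h0 : ¬ CycPos d v.1.1 v.1.2.1 v.1.2.2)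
    (h1 : CycPos d v.1.2.1 v.1.2.2 v.1.1) :
    hFun d v = cycRot (cycRot v) := by simp [hFun, h0, h1]

lemma hFun_eq2 (d : ℚ) (v : CycVert) (h0 : ¬ CycPos d v.1.1 v.1.2.1 v.1.2.2)
    (h1 : ¬ CycPos d v.1.2.1 v.1.2.2 v.1.1) :
    hFun d v = cycRot v := by simp [hFun, h0, h1]

lemma cycRot_three (v : CycVert) : cycRot (cycRot (cycRot v)) = v :=
  Subtype.ext rfl

lemma hFun_invol (d : ℚ) (v : CycVert) : hFun d (hFun d v) = v := by
  by_cases h0 : CycPos d v.1.1 v.1.2.1 v.1.2.2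
  · rw [hFun_eq0 d v h0, hFun_eq0 d v h0]
  · by_cases h1 : CycPos d v.1.2.1 v.1.2.2 v.1.1
    · rw [hFun_eq1 d v h0 h1]
      have h2 : ¬ CycPos d v.1.2.2 v.1.1 v.1.2.1 :=
        fun h2 => cycPos_excl (cycR_rot v.2) h1 h2
      rw [hFun_eq2 d (cycRot (cycRot v)) h2 h0, cycRot_three]
    · have h2 : CycPos d v.1.2.2 v.1.1 v.1.2.1 :=
        (cycPos_total v.2).resolve_left h0 |>.resolve_left h1
      rw [hFun_eq2 d v h0 h1, hFun_eq1 d (cycRot v) h1 h2, cycRot_three]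

lemma hFun_rot (d : ℚ) (v : CycVert) :
    hFun d (cycRot v) = cycRot (cycRot (hFun d v)) := by
  by_cases h0 : CycPos d v.1.1 v.1.2.1 v.1.2.2
  · have h1 : ¬ CycPos d v.1.2.1 v.1.2.2 v.1.1 :=
      fun h1 => cycPos_excl v.2 h0 h1
    have h2 : ¬ CycPos d v.1.2.2 v.1.1 v.1.2.1 :=
      fun h2 => cycPos_excl (cycR_rot (cycR_rot v.2)) h2 h0
    rw [hFun_eq0 d v h0, hFun_eq2 d (cycRot v) h1 h2]
  · by_cases h1 : CycPos d v.1.2.1 v.1.2.2 v.1.1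
    · rw [hFun_eq1 d v h0 h1, hFun_eq0 d (cycRot v) h1]
      exact (cycRot_three (cycRot v)).symm
    · have h2 : CycPos d v.1.2.2 v.1.1 v.1.2.1 :=
        (cycPos_total v.2).resolve_left h0 |>.resolve_left h1
      rw [hFun_eq2 d v h0 h1, hFun_eq1 d (cycRot v) h1 h2]

lemma cycPos_iff (d : ℚ) (π : ℚ → ℚ) (hinj : Function.Injective π) (hd : π d = d)
    (hR : ∀ a b c : ℚ, CycR a b c ↔ CycR (π a) (π b) (π c)) (a b c : ℚ) :
    CycPos d (π a) (π b) (π c) ↔ CycPos d a b c := by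
  unfold CycPos
  constructor
  · rintro (h | h)
    · left; exact hinj (by rw [hd, h])
    · right
      have := (hR a d b).mpr (by rwa [hd])
      exact this
  · rintro (rfl | h)
    · left; exact hd.symm
    · right
      have := (hR a d b).mp h
      rwa [hd] at this

/-- For every atom `d : ℚ` there is a `{d}`-equivariant isomorphism between the graph of
directed triangles `v → σ v` and the reversed graph `v → σ² v` over the cyclic order atoms. -/
theorem stmt_19 (d : ℚ) :
    ∃ h : CycVert → CycVert, Function.Bijective h ∧
      (∀ π : ℚ → ℚ, Function.Bijective π → π d = d →
        (∀ a b c : ℚ, CycR a b c ↔ CycR (π a) (π b) (π c)) →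
        ∀ v w : CycVert, w.1 = (π v.1.1, π v.1.2.1, π v.1.2.2) →
          (h w).1 = (π (h v).1.1, π (h v).1.2.1, π (h v).1.2.2)) ∧
      (∀ v : CycVert, h (cycRot v) = cycRot (cycRot (h v))) := by
  refine ⟨hFun d, Function.Involutive.bijective (hFun_invol d), ?_, hFun_rot d⟩
  intro π hπ hd hR v w hw
  have e1 : w.1.1 = π v.1.1 := by rw [hw]
  have e2 : w.1.2.1 = π v.1.2.1 := by rw [hw]
  have e3 : w.1.2.2 = π v.1.2.2 := by rw [hw]
  have i0 : CycPos d w.1.1 w.1.2.1 w.1.2.2 ↔ CycPos d v.1.1 v.1.2.1 v.1.2.2 := by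
    rw [e1, e2, e3]; exact cycPos_iff d π hπ.injective hd hR _ _ _
  have i1 : CycPos d w.1.2.1 w.1.2.2 w.1.1 ↔ CycPos d v.1.2.1 v.1.2.2 v.1.1 := by
    rw [e1, e2, e3]; exact cycPos_iff d π hπ.injective hd hR _ _ _
  by_cases h0 : CycPos d v.1.1 v.1.2.1 v.1.2.2
  · rw [hFun_eq0 d v h0, hFun_eq0 d w (i0.mpr h0), hw]
  · by_cases h1 : CycPos d v.1.2.1 v.1.2.2 v.1.1
    · rw [hFun_eq1 d v h0 h1, hFun_eq1 d w (fun h => h0 (i0.mp h)) (i1.mpr h1)]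
      show (w.1.2.2, w.1.1, w.1.2.1) = _
      rw [e1, e2, e3]; rfl
    · rw [hFun_eq2 d v h0 h1, hFun_eq2 d w (fun h => h0 (i0.mp h))
        (fun h => h1 (i1.mp h))]
      show (w.1.2.1, w.1.2.2, w.1.1) = _
      rw [e1, e2, e3]; rfl
end
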